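/- Let ℬ = {f ∈ H^∞ : f′(0) = 0}. A map T : ℬ → ℬ is an algebra automorphism (bijective, ℂ-linear and multiplicative) if and only if there exists θ ∈ ℝ such that T f = f ∘ (z ↦ e^{iθ}z) for all f ∈ ℬ. -/

import Mathlib

open Complex Metric Set

local notation "𝔻" => Complex.UnitDisc

/-- The closed unit disc, as a subset of `ℂ`. -/
def cD : Set ℂ := Metric.closedBall 0 1

/-- A function on the open unit disc is analytic (holomorphic):
it is the restriction of a function differentiable on the open unit ball. -/
def HolOn (f : 𝔻 → ℂ) : Prop :=
  ∃ F : ℂ → ℂ, DifferentiableOn ℂ F (Metric.ball 0 1) ∧ ∀ z : 𝔻, F ↑z = f z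

/-- Membership in `H^∞`, the algebra of bounded analytic functions on the unit disc. -/
def MemHinf (f : 𝔻 → ℂ) : Prop :=
  HolOn f ∧ ∃ M : ℝ, ∀ z : 𝔻, ‖f z‖ ≤ M

/-- Membership in the disc algebra `A(𝔻)`: continuous on the closed unit disc,
analytic in its interior. -/
def MemDiscAlg (f : ↥cD → ℂ) : Prop :=
  ∃ F : ℂ → ℂ, ContinuousOn F cD ∧ DifferentiableOn ℂ F (Metric.ball 0 1) ∧
    ∀ z : ↥cD, F ↑z = f z

/-- `φ ∈ Aut(𝔻)`: a bijective analytic self-map of the unit disc. -/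
def IsDiscAut (φ : 𝔻 → 𝔻) : Prop :=
  (∃ F : ℂ → ℂ, DifferentiableOn ℂ F (Metric.ball 0 1) ∧ ∀ z : 𝔻, F ↑z = ↑(φ z)) ∧
  Function.Bijective φ

/-- A Möbius automorphism of the unit disc, given by its global formula
`Φ z = η (a - z) / (1 - conj a * z)` with `|a| < 1`, `|η| = 1`; this is the analytic
extension to (a neighbourhood of) the closed unit disc of a disc automorphism. -/
def IsMobius (Φ : ℂ → ℂ) : Prop :=
  ∃ a η : ℂ, ‖a‖ < 1 ∧ ‖η‖ = 1 ∧
    ∀ z : ℂ, Φ z = η * (a - z) / (1 - (starRingEnd ℂ) a * z)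

/-- `T` is an algebra automorphism of the set `A` of complex-valued functions:
a bijective, `ℂ`-linear and multiplicative self-map of `A`. -/
def IsAlgAutOn {ι : Type} (A : Set (ι → ℂ)) (T : (ι → ℂ) → (ι → ℂ)) : Prop :=
  (∀ f ∈ A, T f ∈ A) ∧
  (∀ f ∈ A, ∀ g ∈ A, T (f + g) = T f + T g) ∧
  (∀ (c : ℂ), ∀ f ∈ A, T (c • f) = c • T f) ∧
  (∀ f ∈ A, ∀ g ∈ A, T (f * g) = T f * T g) ∧
  Set.InjOn T A ∧ Set.SurjOn T A A

/-- The subalgebra `ψ H^∞ = {ψ · g : g ∈ H^∞}`. -/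
def psiH (ψ : 𝔻 → ℂ) : Set (𝔻 → ℂ) :=
  {f | ∃ g, MemHinf g ∧ f = fun z => ψ z * g z}

/-- The subalgebra `ψ A(𝔻) = {ψ · g : g ∈ A(𝔻)}`. -/
def psiA (ψ : ↥cD → ℂ) : Set (↥cD → ℂ) :=
  {f | ∃ g, MemDiscAlg g ∧ f = fun z => ψ z * g z}

/-- The composition operator `C_φ : f ↦ f ∘ φ` is a well-defined algebra automorphism
of the set `A` (it is automatically linear and multiplicative). -/
def CompAutOn (A : Set (𝔻 → ℂ)) (φ : 𝔻 → 𝔻) : Prop :=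
  (∀ f ∈ A, f ∘ φ ∈ A) ∧ Set.InjOn (fun f => f ∘ φ) A ∧ Set.SurjOn (fun f => f ∘ φ) A A

/-- The Möbius factor `τ_a(z) = (a - z)/(1 - conj a · z)`. -/
noncomputable def mobius (a z : ℂ) : ℂ := (a - z) / (1 - (starRingEnd ℂ) a * z)

/-- `f` has a zero of order (multiplicity) `k` at `w`:
`f z = (z - w)^k g z` with `g` analytic and `g w ≠ 0`. -/
def ZeroOrderAt (f : 𝔻 → ℂ) (w : 𝔻) (k : ℕ) : Prop :=
  ∃ g : 𝔻 → ℂ, HolOn g ∧ g w ≠ 0 ∧ ∀ z : 𝔻, f z = ((z : ℂ) - (w : ℂ)) ^ k * g z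

/-- `g` is an invertible element of `H^∞`. -/
def InvHinf (g : 𝔻 → ℂ) : Prop :=
  MemHinf g ∧ ∃ h : 𝔻 → ℂ, MemHinf h ∧ ∀ z, g z * h z = 1

/-- `g` is an invertible element of the disc algebra `A(𝔻)`. -/
def InvDiscAlg (g : ↥cD → ℂ) : Prop :=
  MemDiscAlg g ∧ ∃ h : ↥cD → ℂ, MemDiscAlg h ∧ ∀ z, g z * h z = 1

/-- The subalgebra `ℬ = {f ∈ H^∞ : f'(0) = 0}`. -/
def calB : Set (𝔻 → ℂ) :=
  {f | MemHinf f ∧ ∃ F : ℂ → ℂ, DifferentiableOn ℂ F (Metric.ball 0 1) ∧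
    (∀ z : 𝔻, F ↑z = f z) ∧ deriv F 0 = 0}

/-! For `w ∈ 𝔻`, `f ↦ T f w` is a character `χ` of `ℬ`. Characters are bounded by the sup norm
(`f - c` is invertible in `ℬ` when `|c| > ‖f‖∞`), and `χ` is evaluation at any `λ ∈ 𝔻` with
`λ² = χ z²`, `λ³ = χ z³`: if `h ∈ ℬ` vanishes at `λ ≠ 0`, write `h = (z - λ) g` with `g ∈ H^∞`;
then `λ² z² h = (z³ - λ³) z² g - (z² - λ²) z³ g` with `z² g, z³ g ∈ ℬ`, and if `λ = 0` then
`h² ∈ z² ℬ`. The maximum principle and injectivity of `T` give `|T z²| < 1`, so `T f = f ∘ ψ`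
for a self-map `ψ` of `𝔻`, and `T⁻¹` provides its inverse. Since `ψ²` and `ψ³` are holomorphic
and `ψ` has a single zero, `ψ` is holomorphic; `(ψ²)'(0) = 0` while `ψ'(0) ≠ 0` forces
`ψ(0) = 0`, and the Schwarz lemma for `ψ` and `ψ⁻¹` makes `ψ` a rotation. -/

open Filter Topology

local notation "𝔹" => ball (0 : ℂ) 1

noncomputable def extendDisc (f : 𝔻 → ℂ) (ζ : ℂ) : ℂ :=
  if h : ‖ζ‖ < 1 then f (UnitDisc.mk ζ h) else 0

@[simp]
lemma extendDisc_coe (f : 𝔻 → ℂ) (z : 𝔻) : extendDisc f z = f z := by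
  simp [extendDisc, z.norm_lt_one]

lemma extendDisc_mul (f g : 𝔻 → ℂ) : extendDisc (f * g) = extendDisc f * extendDisc g := by
  ext ζ; by_cases h : ‖ζ‖ < 1 <;> simp [extendDisc, h]

lemma extendDisc_add (f g : 𝔻 → ℂ) : extendDisc (f + g) = extendDisc f + extendDisc g := by
  ext ζ; by_cases h : ‖ζ‖ < 1 <;> simp [extendDisc, h]

lemma extendDisc_inv (f : 𝔻 → ℂ) : extendDisc f⁻¹ = (extendDisc f)⁻¹ := by
  ext ζ; by_cases h : ‖ζ‖ < 1 <;> simp [extendDisc, h]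

lemma extendDisc_pow (f : 𝔻 → ℂ) {n : ℕ} (hn : n ≠ 0) :
    extendDisc (f ^ n) = extendDisc f ^ n := by
  ext ζ; by_cases h : ‖ζ‖ < 1 <;> simp [extendDisc, h, hn]

lemma coe_mem_ball (z : 𝔻) : (z : ℂ) ∈ 𝔹 := mem_ball_zero_iff.mpr z.norm_lt_one

lemma eqOn_extendDisc {f : 𝔻 → ℂ} {F : ℂ → ℂ} (hF : ∀ z : 𝔻, F z = f z) :
    EqOn F (extendDisc f) 𝔹 := fun ζ hζ => by
  lift ζ to 𝔻 using mem_ball_zero_iff.mp hζ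
  simp [hF]

lemma deriv_extendDisc_eq {f : 𝔻 → ℂ} {F : ℂ → ℂ} (hF : ∀ z : 𝔻, F z = f z) {ζ : ℂ}
    (hζ : ζ ∈ 𝔹) : deriv (extendDisc f) ζ = deriv F ζ :=
  ((eqOn_extendDisc hF).eventuallyEq_of_mem (isOpen_ball.mem_nhds hζ)).deriv_eq.symm

lemma mapsTo_extendDisc (ψ : 𝔻 → 𝔻) : MapsTo (extendDisc fun z => (ψ z : ℂ)) 𝔹 𝔹 :=
  fun ζ hζ => by
    lift ζ to 𝔻 using mem_ball_zero_iff.mp hζ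
    simpa using coe_mem_ball (ψ ζ)

lemma leftInvOn_extendDisc {ψ ψ' : 𝔻 → 𝔻} (h : Function.LeftInverse ψ' ψ) :
    LeftInvOn (extendDisc fun z => (ψ' z : ℂ)) (extendDisc fun z => (ψ z : ℂ)) 𝔹 :=
  fun ζ hζ => by
    lift ζ to 𝔻 using mem_ball_zero_iff.mp hζ
    simp [h ζ]

lemma extendDisc_eq_add_mul_dslope (f : 𝔻 → ℂ) (w z : 𝔻) :
    f z = f w + (z - w) * dslope (extendDisc f) w z := by
  rw [← smul_eq_mul, sub_smul_dslope, extendDisc_coe, extendDisc_coe, add_sub_cancel]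

lemma holOn_iff {f : 𝔻 → ℂ} : HolOn f ↔ DifferentiableOn ℂ (extendDisc f) 𝔹 :=
  ⟨fun ⟨_, hd, hF⟩ => hd.congr (eqOn_extendDisc hF).symm, fun h => ⟨_, h, extendDisc_coe f⟩⟩

lemma mem_calB_iff {f : 𝔻 → ℂ} : f ∈ calB ↔ MemHinf f ∧ deriv (extendDisc f) 0 = 0 :=
  ⟨fun ⟨hf, _, _, hF, hF0⟩ => ⟨hf, (deriv_extendDisc_eq hF (mem_ball_self one_pos)).trans hF0⟩,
    fun ⟨hf, h0⟩ => ⟨hf, _, holOn_iff.mp hf.1, extendDisc_coe f, h0⟩⟩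

namespace MemHinf

variable {f g : 𝔻 → ℂ}

lemma differentiableOn (hf : MemHinf f) : DifferentiableOn ℂ (extendDisc f) 𝔹 :=
  holOn_iff.mp hf.1

lemma differentiableAt (hf : MemHinf f) {ζ : ℂ} (hζ : ζ ∈ 𝔹) :
    DifferentiableAt ℂ (extendDisc f) ζ :=
  hf.differentiableOn.differentiableAt (isOpen_ball.mem_nhds hζ)

lemma add (hf : MemHinf f) (hg : MemHinf g) : MemHinf (f + g) := by
  obtain ⟨M, hM⟩ := hf.2
  obtain ⟨N, hN⟩ := hg.2
  refine ⟨holOn_iff.mpr ?_, M + N, fun z => (norm_add_le _ _).trans (add_le_add (hM z) (hN z))⟩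
  rw [extendDisc_add]
  exact hf.differentiableOn.add hg.differentiableOn

lemma mul (hf : MemHinf f) (hg : MemHinf g) : MemHinf (f * g) := by
  obtain ⟨M, hM⟩ := hf.2
  obtain ⟨N, hN⟩ := hg.2
  refine ⟨holOn_iff.mpr ?_, M * N, fun z => ?_⟩
  · rw [extendDisc_mul]
    exact hf.differentiableOn.mul hg.differentiableOn
  · rw [Pi.mul_apply, norm_mul]
    exact mul_le_mul (hM z) (hN z) (norm_nonneg _) ((norm_nonneg _).trans (hM z))

end MemHinf

lemma memHinf_const (c : ℂ) : MemHinf fun _ => c :=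
  ⟨⟨_, differentiableOn_const c, fun _ => rfl⟩, ‖c‖, fun _ => le_rfl⟩

lemma memHinf_coe : MemHinf fun z : 𝔻 => (z : ℂ) :=
  ⟨⟨_, differentiableOn_id, fun _ => rfl⟩, 1, fun z => z.norm_lt_one.le⟩

lemma memHinf_dslope {f : 𝔻 → ℂ} (hf : MemHinf f) (w : 𝔻) :
    MemHinf fun z : 𝔻 => dslope (extendDisc f) w z := by
  have hd : DifferentiableOn ℂ (dslope (extendDisc f) w) 𝔹 :=
    (differentiableOn_dslope (isOpen_ball.mem_nhds (coe_mem_ball w))).mpr hf.differentiableOn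
  refine ⟨⟨_, hd, fun _ => rfl⟩, ?_⟩
  obtain ⟨M, hM⟩ := hf.2
  -- Near `w` use compactness; away from `w` divide the bound `2 M` by `δ ≤ |z - w|`.
  set δ := (1 - ‖(w : ℂ)‖) / 2 with hδ_def
  have hδ : 0 < δ := by linarith [w.norm_lt_one]
  have hsub : closedBall (w : ℂ) δ ⊆ 𝔹 :=
    closedBall_subset_ball' (by rw [dist_zero_right]; linarith [w.norm_lt_one])
  obtain ⟨C, hC⟩ :=
    (isCompact_closedBall _ _).exists_bound_of_continuousOn (hd.continuousOn.mono hsub)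
  refine ⟨max C (2 * M / δ), fun z => ?_⟩
  rcases le_or_gt (dist (z : ℂ) w) δ with hz | hz
  · exact (hC _ (mem_closedBall.mpr hz)).trans (le_max_left _ _)
  have hne : (z : ℂ) ≠ w := fun h => by simp [h] at hz; linarith
  have hM0 : 0 ≤ M := (norm_nonneg _).trans (hM z)
  dsimp only
  rw [dslope_of_ne _ hne, slope_def_field, extendDisc_coe, extendDisc_coe, norm_div]
  refine le_trans ?_ (le_max_right _ _)
  exact div_le_div₀ (by positivity) ((norm_sub_le _ _).trans (by linarith [hM z, hM w])) hδ
    (by rw [← dist_eq_norm]; exact hz.le)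

lemma sq_mul_mem_calB {g : 𝔻 → ℂ} (hg : MemHinf g) :
    (fun z : 𝔻 => (z : ℂ) ^ 2 * g z) ∈ calB := by
  have hF : ∀ z : 𝔻, (z : ℂ) ^ 2 * extendDisc g z = z ^ 2 * g z := by simp
  obtain ⟨M, hM⟩ := hg.2
  refine mem_calB_iff.mpr ⟨⟨⟨_, (differentiableOn_pow 2).mul hg.differentiableOn, hF⟩,
    M, fun z => ?_⟩, ?_⟩
  · rw [norm_mul, norm_pow]
    exact (mul_le_of_le_one_left (norm_nonneg _)
      (pow_le_one₀ (norm_nonneg _) z.norm_lt_one.le)).trans (hM z)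
  · rw [deriv_extendDisc_eq (F := fun ζ => ζ ^ 2 * extendDisc g ζ) hF (mem_ball_self one_pos)]
    simpa using ((hasDerivAt_pow 2 (0 : ℂ)).fun_mul
      (hg.differentiableAt (mem_ball_self one_pos)).hasDerivAt).deriv

namespace calB

variable {f g : 𝔻 → ℂ}

lemma const_mem (c : ℂ) : (fun _ => c) ∈ calB := by
  refine mem_calB_iff.mpr ⟨memHinf_const c, ?_⟩
  rw [deriv_extendDisc_eq (F := fun _ => c) (fun _ => rfl) (mem_ball_self one_pos), deriv_const]

lemma add_mem (hf : f ∈ calB) (hg : g ∈ calB) : f + g ∈ calB := by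
  rw [mem_calB_iff] at *
  refine ⟨hf.1.add hg.1, ?_⟩
  rw [extendDisc_add, deriv_add (hf.1.differentiableAt (mem_ball_self one_pos))
    (hg.1.differentiableAt (mem_ball_self one_pos)), hf.2, hg.2, add_zero]

lemma mul_mem (hf : f ∈ calB) (hg : g ∈ calB) : f * g ∈ calB := by
  rw [mem_calB_iff] at *
  refine ⟨hf.1.mul hg.1, ?_⟩
  rw [extendDisc_mul, deriv_mul (hf.1.differentiableAt (mem_ball_self one_pos))
    (hg.1.differentiableAt (mem_ball_self one_pos)), hf.2, hg.2]
  simp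

lemma inv_mem (hf : f ∈ calB) {ε : ℝ} (hε : 0 < ε) (hfε : ∀ z, ε ≤ ‖f z‖) : f⁻¹ ∈ calB := by
  rw [mem_calB_iff] at hf ⊢
  have hne : ∀ ζ ∈ 𝔹, extendDisc f ζ ≠ 0 := fun ζ hζ h => by
    lift ζ to 𝔻 using mem_ball_zero_iff.mp hζ
    have := hfε ζ
    simp only [extendDisc_coe] at h
    simp only [h, norm_zero] at this
    linarith
  refine ⟨⟨holOn_iff.mpr ?_, ε⁻¹, fun z => ?_⟩, ?_⟩
  · rw [extendDisc_inv]
    exact hf.1.differentiableOn.inv hne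
  · rw [Pi.inv_apply, norm_inv]
    exact inv_anti₀ hε (hfε z)
  · rw [extendDisc_inv]
    have := ((hf.1.differentiableAt (mem_ball_self one_pos)).hasDerivAt.inv
      (hne 0 (mem_ball_self one_pos))).deriv
    rw [hf.2] at this
    simpa using this

lemma comp_smul_mem (hf : f ∈ calB) (c : Circle) : f ∘ (c • ·) ∈ calB := by
  rw [mem_calB_iff] at hf ⊢
  have hF : ∀ z : 𝔻, extendDisc f (c * z) = (f ∘ (c • ·)) z := fun z => by
    rw [← UnitDisc.coe_circle_smul, extendDisc_coe, Function.comp_apply]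
  have hmaps : MapsTo (fun ζ : ℂ => (c : ℂ) * ζ) 𝔹 𝔹 := fun ζ hζ => by
    simpa [Circle.norm_coe] using hζ
  obtain ⟨M, hM⟩ := hf.1.2
  refine ⟨⟨⟨_, hf.1.differentiableOn.comp (differentiableOn_id.const_mul _) hmaps, hF⟩,
    M, fun z => hM _⟩, ?_⟩
  rw [deriv_extendDisc_eq (F := fun ζ => extendDisc f (c * ζ)) hF (mem_ball_self one_pos),
    deriv_comp_mul_left, mul_zero, hf.2, smul_zero]

end calB

def subalgebraB : Subalgebra ℂ (𝔻 → ℂ) where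
  carrier := calB
  mul_mem' := calB.mul_mem
  add_mem' := calB.add_mem
  algebraMap_mem' := calB.const_mem

local notation "ℬ" => subalgebraB

@[simp]
lemma mem_subalgebraB {f : 𝔻 → ℂ} : f ∈ ℬ ↔ f ∈ calB := Iff.rfl

instance : CoeFun ℬ fun _ => 𝔻 → ℂ := ⟨Subtype.val⟩

def zSq : ℬ := ⟨fun z => (z : ℂ) ^ 2, by simpa using sq_mul_mem_calB (memHinf_const 1)⟩

def zCube : ℬ := ⟨fun z => (z : ℂ) ^ 3, by simpa [pow_succ] using sq_mul_mem_calB memHinf_coe⟩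

@[simp] lemma zSq_apply (z : 𝔻) : zSq z = (z : ℂ) ^ 2 := rfl

@[simp] lemma zCube_apply (z : 𝔻) : zCube z = (z : ℂ) ^ 3 := rfl

lemma isUnit_of_le_norm (f : ℬ) {ε : ℝ} (hε : 0 < ε) (hfε : ∀ z, ε ≤ ‖f z‖) : IsUnit f :=
  IsUnit.of_mul_eq_one ⟨_, calB.inv_mem f.2 hε hfε⟩ <| Subtype.ext <| funext fun z =>
    mul_inv_cancel₀ (norm_pos_iff.mp (hε.trans_le (hfε z)))

lemma norm_le_of_mem_spectrum (f : ℬ) {M : ℝ} (hM : ∀ z, ‖f z‖ ≤ M) {c : ℂ}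
    (hc : c ∈ spectrum ℂ f) : ‖c‖ ≤ M := by
  by_contra! hMc
  refine spectrum.mem_iff.mp hc (isUnit_of_le_norm _ (sub_pos.mpr hMc) fun z => ?_)
  calc ‖c‖ - M ≤ ‖c‖ - ‖f z‖ := by linarith [hM z]
    _ ≤ ‖c - f z‖ := norm_sub_norm_le _ _

lemma eq_of_sq_eq_of_cube_eq {R : Type*} [CommRing R] [IsDomain R] {a b : R}
    (h2 : a ^ 2 = b ^ 2) (h3 : a ^ 3 = b ^ 3) : a = b := by
  rcases eq_or_ne b 0 with rfl | hb
  · simpa using h2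
  refine mul_left_cancel₀ (pow_ne_zero 2 hb) ?_
  linear_combination (-a) * h2 + h3

namespace AlgHom

variable (χ : ℬ →ₐ[ℂ] ℂ) {w : 𝔻}

lemma norm_apply_le (f : ℬ) {M : ℝ} (hM : ∀ z, ‖f z‖ ≤ M) : ‖χ f‖ ≤ M :=
  norm_le_of_mem_spectrum f hM (AlgHom.apply_mem_spectrum χ f)

lemma apply_eq_zero_of_apply_eq_zero (h2 : χ zSq = (w : ℂ) ^ 2) (h3 : χ zCube = (w : ℂ) ^ 3)
    {h : ℬ} (hw : h w = 0) : χ h = 0 := by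
  have hh : MemHinf h := (mem_calB_iff.mp h.2).1
  set g : 𝔻 → ℂ := fun z => dslope (extendDisc h) w z
  have hg : MemHinf g := memHinf_dslope hh w
  have hhg : ∀ z : 𝔻, h z = (z - w) * g z := fun z => by
    simpa [hw] using extendDisc_eq_add_mul_dslope h w z
  rcases eq_or_ne w 0 with rfl | hw0
  · have hg0 : g 0 = 0 := by
      simpa [g] using (mem_calB_iff.mp h.2).2
    set k : 𝔻 → ℂ := fun z => dslope (extendDisc g) 0 z
    have hk : MemHinf k := memHinf_dslope hg 0
    have hgk : ∀ z : 𝔻, g z = z * k z := fun z => by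
      simpa [hg0] using extendDisc_eq_add_mul_dslope g 0 z
    have hsq : h * h = zSq * ⟨_, sq_mul_mem_calB (hk.mul hk)⟩ :=
      Subtype.ext <| funext fun z => by
        simp only [Subalgebra.coe_mul, Pi.mul_apply, zSq_apply, hhg, hgk, UnitDisc.coe_zero]
        ring
    have := congrArg χ hsq
    rw [map_mul, map_mul, h2] at this
    simpa using this
  · have hid : (w : ℂ) ^ 2 • (h * zSq) =
        (zCube - algebraMap ℂ ℬ ((w : ℂ) ^ 3)) * ⟨_, sq_mul_mem_calB hg⟩ -
        (zSq - algebraMap ℂ ℬ ((w : ℂ) ^ 2)) * ⟨_, sq_mul_mem_calB (memHinf_coe.mul hg)⟩ :=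
      Subtype.ext <| funext fun z => by
        simp only [SetLike.val_smul, MulMemClass.coe_mul, Pi.smul_apply, Pi.mul_apply, hhg,
          zSq_apply, smul_eq_mul, map_pow, AddSubgroupClass.coe_sub, SubmonoidClass.coe_pow,
          SubalgebraClass.coe_algebraMap, Pi.sub_apply, zCube_apply, Pi.pow_apply,
          Pi.algebraMap_apply, Algebra.algebraMap_self, RingHom.id_apply]
        ring
    have := congrArg χ hid
    simp only [map_smul, map_mul, map_sub, AlgHom.commutes, h2, h3] at this
    simpa [hw0] using this

lemma apply_eq_of_apply_zSq_of_apply_zCube (h2 : χ zSq = (w : ℂ) ^ 2)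
    (h3 : χ zCube = (w : ℂ) ^ 3) (f : ℬ) : χ f = f w := by
  have := χ.apply_eq_zero_of_apply_eq_zero h2 h3 (h := f - algebraMap ℂ ℬ (f w)) (by simp)
  rwa [map_sub, AlgHom.commutes, Algebra.algebraMap_self, RingHom.id_apply, sub_eq_zero] at this

lemma exists_apply_eq_eval (hχ : ‖χ zSq‖ < 1) : ∃ w : 𝔻, ∀ f : ℬ, χ f = f w := by
  have hsc : zCube ^ 2 = zSq ^ 3 := Subtype.ext <| funext fun z => by simp [← pow_mul]
  obtain ⟨c, h3, h2⟩ := (pow_eq_pow_iff_of_coprime (by norm_num : Nat.Coprime 2 3)).mp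
    (by simpa using congrArg χ hsc)
  have hc : ‖c‖ < 1 := by
    rw [h2, norm_pow] at hχ
    exact (pow_lt_one_iff_of_nonneg (norm_nonneg c) two_ne_zero).mp hχ
  exact ⟨UnitDisc.mk c hc, χ.apply_eq_of_apply_zSq_of_apply_zCube h2 h3⟩

end AlgHom

lemma isAlgAutOn_iff {ι : Type} {A : Subalgebra ℂ (ι → ℂ)} {T : (ι → ℂ) → (ι → ℂ)} :
    IsAlgAutOn A T ↔ ∃ e : A ≃ₐ[ℂ] A, ∀ f : A, T f = e f := by
  constructor
  · rintro ⟨hmaps, hadd, hsmul, hmul, hinj, hsurj⟩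
    let l : A →ₗ[ℂ] A :=
      { toFun := fun f => ⟨T f, hmaps f f.2⟩
        map_add' := fun f g => Subtype.ext (hadd f f.2 g g.2)
        map_smul' := fun c f => Subtype.ext (hsmul c f f.2) }
    have hone : l 1 = 1 := by
      obtain ⟨g, hg, hTg⟩ := hsurj A.one_mem
      refine Subtype.ext ?_
      calc T 1 = T 1 * T g := by rw [hTg, mul_one]
        _ = 1 := by rw [← hmul 1 A.one_mem g hg, one_mul, hTg]
    refine ⟨AlgEquiv.ofBijective (AlgHom.ofLinearMap l hone fun f g => Subtype.ext
      (hmul f f.2 g g.2)) ⟨fun f g hfg => Subtype.ext (hinj f.2 g.2 (congrArg Subtype.val hfg)),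
        fun g => ?_⟩, fun f => rfl⟩
    obtain ⟨f, hf, hTf⟩ := hsurj g.2
    exact ⟨⟨f, hf⟩, Subtype.ext hTf⟩
  · rintro ⟨e, he⟩
    replace he : ∀ f (hf : f ∈ A), T f = (e ⟨f, hf⟩ : ι → ℂ) := fun f hf => he ⟨f, hf⟩
    refine ⟨fun f hf => he f hf ▸ (e ⟨f, hf⟩).2, fun f hf g hg => ?_, fun c f hf => ?_,
      fun f hf g hg => ?_, fun f hf g hg hfg => ?_, fun g hg => ?_⟩
    · rw [he f hf, he g hg, he _ (A.add_mem hf hg), ← Subalgebra.coe_add, ← map_add]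
      rfl
    · rw [he f hf, he _ (A.smul_mem hf c), ← Subalgebra.coe_smul, ← map_smul]
      rfl
    · rw [he f hf, he g hg, he _ (A.mul_mem hf hg), ← Subalgebra.coe_mul, ← map_mul]
      rfl
    · rw [he f hf, he g hg] at hfg
      simpa using hfg
    · exact ⟨e.symm ⟨g, hg⟩, (e.symm ⟨g, hg⟩).2, by rw [he _ (e.symm ⟨g, hg⟩).2]; simp⟩

lemma HolOn.eq_const_of_norm_le {f : 𝔻 → ℂ} (hf : HolOn f) {w : 𝔻}
    (hw : ∀ z, ‖f z‖ ≤ ‖f w‖) : f = fun _ => f w := by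
  have hmax : IsMaxOn (norm ∘ extendDisc f) 𝔹 w := fun ζ hζ => by
    lift ζ to 𝔻 using mem_ball_zero_iff.mp hζ
    simpa using hw ζ
  have := Complex.eqOn_of_isPreconnected_of_isMaxOn_norm (convex_ball (0 : ℂ) 1).isPreconnected
    isOpen_ball (holOn_iff.mp hf) (coe_mem_ball w) hmax
  funext z
  simpa using this (coe_mem_ball z)

lemma DifferentiableOn.of_sq_of_cube {f : ℂ → ℂ} {U : Set ℂ} (hU : IsOpen U)
    (h2 : DifferentiableOn ℂ (fun z => f z ^ 2) U) (h3 : DifferentiableOn ℂ (fun z => f z ^ 3) U)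
    {ν : ℂ} (hν : ν ∈ U) (hzero : ∀ z ∈ U, f z = 0 ↔ z = ν) : DifferentiableOn ℂ f U := by
  refine (differentiableOn_compl_singleton_and_continuousAt_iff (hU.mem_nhds hν)).mp ⟨?_, ?_⟩
  · have hne : ∀ z ∈ U \ {ν}, f z ^ 2 ≠ 0 := fun z hz =>
      pow_ne_zero 2 fun h => hz.2 ((hzero z hz.1).mp h)
    refine ((h3.mono sdiff_subset).div (h2.mono sdiff_subset) hne).congr fun z hz => ?_
    rw [Pi.div_apply, eq_div_iff (hne z hz)]
    ring
  · -- `‖f‖ = √‖f ^ 2‖` is continuous at the zero `ν`.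
    have hfν : f ν = 0 := (hzero ν hν).mpr rfl
    have hsq := (h2.continuousOn.continuousAt (hU.mem_nhds hν)).norm.sqrt
    simp only [norm_pow, Real.sqrt_sq (norm_nonneg _)] at hsq
    rw [ContinuousAt, hfν, tendsto_zero_iff_norm_tendsto_zero]
    simpa [hfν] using hsq.tendsto

lemma HolOn.of_sq_of_cube {f : 𝔻 → ℂ} (h2 : HolOn (f ^ 2)) (h3 : HolOn (f ^ 3)) {ν : 𝔻}
    (hzero : ∀ z, f z = 0 ↔ z = ν) : HolOn f := by
  rw [holOn_iff, extendDisc_pow f two_ne_zero] at h2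
  rw [holOn_iff, extendDisc_pow f three_ne_zero] at h3
  refine holOn_iff.mpr (h2.of_sq_of_cube isOpen_ball h3 (coe_mem_ball ν) fun ζ hζ => ?_)
  lift ζ to 𝔻 using mem_ball_zero_iff.mp hζ
  simp [hzero]

lemma eq_zero_of_deriv_sq_eq_zero {𝕜 : Type*} [NontriviallyNormedField 𝕜] [CharZero 𝕜]
    {f g : 𝕜 → 𝕜} {c : 𝕜} (hf : DifferentiableAt 𝕜 f c) (hg : DifferentiableAt 𝕜 g (f c))
    (hgf : ∀ᶠ z in 𝓝 c, g (f z) = z) (h : deriv (fun z => f z ^ 2) c = 0) : f c = 0 := by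
  have hid : g ∘ f =ᶠ[𝓝 c] id := hgf
  have hchain : deriv g (f c) * deriv f c = 1 := by
    rw [← deriv_comp c hg hf, hid.deriv_eq, deriv_id]
  have : 2 * f c * deriv f c = 0 := by
    rw [← h, deriv_fun_pow hf]
    ring
  simpa [right_ne_zero_of_mul_eq_one hchain] using this

lemma exists_eqOn_mul_of_leftInvOn {f g : ℂ → ℂ} (hf : DifferentiableOn ℂ f 𝔹)
    (hg : DifferentiableOn ℂ g 𝔹) (hfm : MapsTo f 𝔹 𝔹) (hgm : MapsTo g 𝔹 𝔹) (hf0 : f 0 = 0)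
    (hgf : LeftInvOn g f 𝔹) : ∃ C : ℂ, ‖C‖ = 1 ∧ EqOn f (fun z => C * z) 𝔹 := by
  have hg0 : g 0 = 0 := by simpa [hf0] using hgf (mem_ball_self one_pos)
  have hnorm : ∀ z ∈ 𝔹, ‖f z‖ = ‖z‖ := fun z hz => by
    refine le_antisymm (Complex.norm_le_norm_of_mapsTo_ball hf
      (hfm.mono_right ball_subset_closedBall) hf0 (mem_ball_zero_iff.mp hz)) ?_
    calc ‖z‖ = ‖g (f z)‖ := by rw [hgf hz]
      _ ≤ ‖f z‖ := Complex.norm_le_norm_of_mapsTo_ball hg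
          (hgm.mono_right ball_subset_closedBall) hg0 (mem_ball_zero_iff.mp (hfm hz))
  have hhalf : (1 / 2 : ℂ) ∈ 𝔹 := by rw [mem_ball_zero_iff]; norm_num
  obtain ⟨C, hC, hfC⟩ := Complex.affine_of_mapsTo_ball_of_exists_norm_dslope_eq_div' hf
    (R₂ := 1) (by rw [hf0]; exact hfm.mono_right ball_subset_closedBall)
    ⟨1 / 2, hhalf, by
      rw [dslope_of_ne _ (by norm_num), slope_def_field, hf0, sub_zero, sub_zero, norm_div,
        hnorm _ hhalf, div_self (by norm_num), div_one]⟩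
  exact ⟨C, by simpa using hC, fun z hz => by simpa [hf0, mul_comm] using hfC hz⟩

namespace AlgEquiv

variable (e : ℬ ≃ₐ[ℂ] ℬ) {ψ : 𝔻 → 𝔻}

def evalAlgHom (w : 𝔻) : ℬ →ₐ[ℂ] ℂ :=
  (Pi.evalAlgHom ℂ (fun _ => ℂ) w).comp ((Subalgebra.val ℬ).comp e.toAlgHom)

@[simp] lemma evalAlgHom_apply (w : 𝔻) (f : ℬ) : e.evalAlgHom w f = e f w := rfl

lemma norm_apply_zSq_lt_one (w : 𝔻) : ‖e zSq w‖ < 1 := by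
  have hle : ∀ z, ‖e zSq z‖ ≤ 1 := fun z => (e.evalAlgHom z).norm_apply_le zSq fun z => by
    simpa using z.norm_lt_one.le
  refine (hle w).lt_of_ne fun hw => ?_
  have hconst := HolOn.eq_const_of_norm_le (mem_calB_iff.mp (e zSq).2).1.1 fun z => hw ▸ hle z
  have : zSq = algebraMap ℂ ℬ (e zSq w) :=
    e.injective (by rw [e.commutes]; exact Subtype.ext hconst)
  have h := congrArg (fun f : ℬ => f 0 - f (UnitDisc.mk (1 / 2) (by norm_num))) this
  norm_num at h

lemma exists_apply_eq_comp : ∃ ψ : 𝔻 → 𝔻, ∀ f : ℬ, (e f : 𝔻 → ℂ) = f ∘ ψ := by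
  choose ψ hψ using fun w => (e.evalAlgHom w).exists_apply_eq_eval (e.norm_apply_zSq_lt_one w)
  exact ⟨ψ, fun f => funext fun w => hψ w f⟩

lemma leftInverse_of_apply_eq_comp (hψ : ∀ f : ℬ, (e f : 𝔻 → ℂ) = f ∘ ψ) {ψ' : 𝔻 → 𝔻}
    (hψ' : ∀ f : ℬ, (e.symm f : 𝔻 → ℂ) = f ∘ ψ') : Function.LeftInverse ψ' ψ := fun w => by
  have hf : ∀ f : ℬ, f (ψ' (ψ w)) = f w := fun f => by
    rw [← Function.comp_apply (f := f), ← hψ', ← Function.comp_apply (f := e.symm f), ← hψ,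
      apply_symm_apply]
  exact UnitDisc.coe_injective (eq_of_sq_eq_of_cube_eq (hf zSq) (hf zCube))

lemma holOn_of_apply_eq_comp (hψ : ∀ f : ℬ, (e f : 𝔻 → ℂ) = f ∘ ψ)
    (hbij : Function.Bijective ψ) : HolOn fun z => (ψ z : ℂ) := by
  have h2 : (fun z => (ψ z : ℂ)) ^ 2 = e zSq := by rw [hψ]; rfl
  have h3 : (fun z => (ψ z : ℂ)) ^ 3 = e zCube := by rw [hψ]; rfl
  obtain ⟨ν, hν⟩ := hbij.2 0
  refine HolOn.of_sq_of_cube (h2 ▸ (mem_calB_iff.mp (e zSq).2).1.1)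
    (h3 ▸ (mem_calB_iff.mp (e zCube).2).1.1) (ν := ν) fun z => ?_
  rw [UnitDisc.coe_eq_zero, ← hν, hbij.1.eq_iff]

lemma exists_apply_eq_comp_smul :
    ∃ θ : ℝ, ∀ f : ℬ, (e f : 𝔻 → ℂ) = f ∘ (Circle.exp θ • ·) := by
  obtain ⟨ψ, hψ⟩ := e.exists_apply_eq_comp
  obtain ⟨ψ', hψ'⟩ := e.symm.exists_apply_eq_comp
  have hleft : Function.LeftInverse ψ' ψ := e.leftInverse_of_apply_eq_comp hψ hψ'
  have hright : Function.RightInverse ψ' ψ := e.symm.leftInverse_of_apply_eq_comp hψ' hψ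
  set Ψ := extendDisc fun z => (ψ z : ℂ)
  set Ψ' := extendDisc fun z => (ψ' z : ℂ)
  have hΨ : DifferentiableOn ℂ Ψ 𝔹 :=
    holOn_iff.mp (e.holOn_of_apply_eq_comp hψ ⟨hleft.injective, hright.surjective⟩)
  have hΨ' : DifferentiableOn ℂ Ψ' 𝔹 :=
    holOn_iff.mp (e.symm.holOn_of_apply_eq_comp hψ' ⟨hright.injective, hleft.surjective⟩)
  have hΨ0 : Ψ 0 = 0 := by
    refine eq_zero_of_deriv_sq_eq_zero (hΨ.differentiableAt (ball_mem_nhds 0 one_pos))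
      (hΨ'.differentiableAt (isOpen_ball.mem_nhds (mapsTo_extendDisc ψ (mem_ball_self one_pos))))
      (eventually_of_mem (ball_mem_nhds 0 one_pos) (leftInvOn_extendDisc hleft)) ?_
    have h2 : (fun z => (ψ z : ℂ)) ^ 2 = e zSq := by rw [hψ]; rfl
    rw [← Pi.pow_def, ← extendDisc_pow _ two_ne_zero, h2]
    exact (mem_calB_iff.mp (e zSq).2).2
  obtain ⟨C, hC, hΨC⟩ := exists_eqOn_mul_of_leftInvOn hΨ hΨ' (mapsTo_extendDisc ψ)
    (mapsTo_extendDisc ψ') hΨ0 (leftInvOn_extendDisc hleft)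
  have hexp : Complex.exp (arg C * I) = C := by simpa [hC] using norm_mul_exp_arg_mul_I C
  refine ⟨arg C, fun f => ?_⟩
  rw [hψ]
  congr 1
  funext z
  apply UnitDisc.coe_injective
  rw [UnitDisc.coe_circle_smul, Circle.coe_exp, hexp]
  simpa [Ψ] using hΨC (coe_mem_ball z)

end AlgEquiv

noncomputable def rotationAlgEquiv (c : Circle) : ℬ ≃ₐ[ℂ] ℬ where
  toFun f := ⟨f ∘ (c • ·), calB.comp_smul_mem f.2 c⟩
  invFun f := ⟨f ∘ (c⁻¹ • ·), calB.comp_smul_mem f.2 c⁻¹⟩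
  left_inv f := Subtype.ext <| funext fun z => by simp
  right_inv f := Subtype.ext <| funext fun z => by simp
  map_mul' _ _ := rfl
  map_add' _ _ := rfl
  commutes' _ := rfl

/-- `T` is an algebra automorphism of `ℬ = {f ∈ H^∞ : f'(0) = 0}` iff
`T f = f ∘ (z ↦ e^{iθ} z)` for some `θ ∈ ℝ`. -/
theorem stmt_2 (T : (𝔻 → ℂ) → (𝔻 → ℂ)) :
    IsAlgAutOn calB T ↔
      ∃ θ : ℝ, ∃ φ : 𝔻 → 𝔻,
        (∀ z : 𝔻, (↑(φ z) : ℂ) = Complex.exp (θ * Complex.I) * ↑z) ∧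
        ∀ f ∈ calB, T f = f ∘ φ := by
  have hrot : ∀ θ : ℝ, ∀ z : 𝔻, ((Circle.exp θ • z : 𝔻) : ℂ) = Complex.exp (θ * I) * z :=
    fun θ z => by rw [UnitDisc.coe_circle_smul, Circle.coe_exp]
  refine (isAlgAutOn_iff (A := ℬ)).trans ⟨fun ⟨e, he⟩ => ?_, fun ⟨θ, φ, hφ, hT⟩ => ?_⟩
  · obtain ⟨θ, hθ⟩ := e.exists_apply_eq_comp_smul
    exact ⟨θ, (Circle.exp θ • ·), hrot θ, fun f hf => (he ⟨f, hf⟩).trans (hθ _)⟩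
  · obtain rfl : φ = (Circle.exp θ • ·) :=
      funext fun z => UnitDisc.coe_injective (by rw [hφ, hrot])
    exact ⟨rotationAlgEquiv (Circle.exp θ), fun f => hT f f.2⟩
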